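/- arXiv:2602.12664 — 2 statements merged into one kernel-verified Lean document; each statement's English description precedes it below -/
import Mathlib

section
/- For any subsets S, T of a finite set V, the subspaces satisfy U_S ∩ U_T = U_{S ∩ T}. -/
open Submodule Finset

variable {V : Type*} [Fintype V] [DecidableEq V]

/-- The set of nontrivial partitions `Π*(α)` of `α`, encoded as setoids different from `⊤`
(the one-block partition). -/
def NontrivPart (α : Type*) := {P : Setoid α // P ≠ ⊤}

/-- Restriction `P|_S` of a partition of `V` to a subset `S`: the partition of `S` whose blocks
are the nonempty intersections of blocks of `P` with `S`. -/
def restrictS (S : Set V) (P : Setoid V) : Setoid ↥S := Setoid.comap Subtype.val P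

open Classical in
/-- The indicator function `1_{S,π} : Π*(V) → ℝ`, equal to `1` at `P` iff `P|_S = π`. -/
noncomputable def ind (S : Set V) (π : Setoid ↥S) : NontrivPart V → ℝ :=
  fun P => if restrictS S P.1 = π then 1 else 0

/-- The subspace `U_S ⊆ ℝ^{Π*(V)}` spanned by the indicators `1_{S,π}` over nontrivial
partitions `π` of `S` (equal to `{0}` when `|S| ≤ 1`, since then no nontrivial `π` exists). -/
noncomputable def U (S : Set V) : Submodule ℝ (NontrivPart V → ℝ) :=
  Submodule.span ℝ {f | ∃ π : Setoid ↥S, π ≠ ⊤ ∧ f = ind S π}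

/-- Bell number `B n`: the number of partitions (setoids) of an `n`-element set. -/
noncomputable def bell (n : ℕ) : ℕ := Nat.card (Setoid (Fin n))

/-- Stirling number of the second kind `S(u,j)`: the number of partitions of a `u`-element set
into exactly `j` blocks. -/
noncomputable def stirling (u j : ℕ) : ℕ :=
  Nat.card {σ : Setoid (Fin u) // Nat.card (Quotient σ) = j}

section Aux

instance setoidFinite (α : Type*) [Finite α] : Finite (Setoid α) :=
  Finite.of_injective (fun s : Setoid α => ⇑s) fun _ _ h =>
    Setoid.ext fun x y => iff_of_eq (congrFun (congrFun h x) y)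

omit [Fintype V] [DecidableEq V]

lemma restrictS_top (S : Set V) : restrictS S (⊤ : Setoid V) = ⊤ :=
  Setoid.ext fun _ _ => by constructor <;> intro <;> trivial

/-- Characterization of membership in `U S`: functions factoring through restriction to `S`
and vanishing on the class of `⊤`. -/
lemma mem_U_iff [Fintype V] (S : Set V) (f : NontrivPart V → ℝ) :
    f ∈ U S ↔ ∃ g : Setoid ↥S → ℝ, g ⊤ = 0 ∧ ∀ P : NontrivPart V, f P = g (restrictS S P.1) := by
  classical
  constructor
  · intro hf
    induction hf using Submodule.span_induction with
    | mem x hx =>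
      obtain ⟨π, hπ, rfl⟩ := hx
      exact ⟨fun σ => if σ = π then 1 else 0, by simp [hπ.symm, Ne.symm hπ], fun P => by
        simp [ind]⟩
    | zero => exact ⟨0, rfl, fun _ => rfl⟩
    | add x y _ _ hx hy =>
      obtain ⟨g1, hg1, h1⟩ := hx; obtain ⟨g2, hg2, h2⟩ := hy
      exact ⟨g1 + g2, by simp [hg1, hg2], fun P => by simp [h1 P, h2 P]⟩
    | smul c x _ hx =>
      obtain ⟨g, hg, h⟩ := hx
      exact ⟨c • g, by simp [hg], fun P => by simp [h P]⟩
  · rintro ⟨g, hg, hfg⟩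
    have : Fintype (Setoid ↥S) := Fintype.ofFinite _
    have hs : f = ∑ π : Setoid ↥S, g π • ind S π := by
      funext P
      simp only [Finset.sum_apply, Pi.smul_apply, ind, smul_eq_mul, mul_ite, mul_one, mul_zero]
      rw [Finset.sum_ite_eq (Finset.univ) (restrictS S P.1) g]
      simp [hfg P]
    rw [hs]
    refine Submodule.sum_mem _ fun π _ => ?_
    by_cases hπ : π = ⊤
    · subst hπ; rw [hg, zero_smul]; exact zero_mem _
    · exact Submodule.smul_mem _ _ (Submodule.subset_span ⟨π, hπ, rfl⟩)

/-- Gluing: two partitions agreeing on `S ∩ T` can be glued into one partition restricting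
to the first on `S` and the second on `T`. -/
lemma glue_exists {S T : Set V} {P Q : Setoid V}
    (hag : ∀ z w : V, z ∈ S → z ∈ T → w ∈ S → w ∈ T → (P z w ↔ Q z w)) :
    ∃ R : Setoid V, restrictS S R = restrictS S P ∧ restrictS T R = restrictS T Q := by
  set r : V → V → Prop := fun x y => x = y ∨ (x ∈ S ∧ y ∈ S ∧ P x y) ∨ (x ∈ T ∧ y ∈ T ∧ Q x y) ∨
    (x ∈ S ∧ y ∈ T ∧ ∃ w, w ∈ S ∧ w ∈ T ∧ P x w ∧ Q w y) ∨
    (x ∈ T ∧ y ∈ S ∧ ∃ w, w ∈ S ∧ w ∈ T ∧ Q x w ∧ P w y) with hr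
  have hsymm : ∀ x y, r x y → r y x := by
    intro x y h
    rcases h with h | ⟨hx, hy, h⟩ | ⟨hx, hy, h⟩ | ⟨hx, hy, w, hwS, hwT, h1, h2⟩ |
      ⟨hx, hy, w, hwS, hwT, h1, h2⟩
    · exact Or.inl h.symm
    · exact Or.inr (Or.inl ⟨hy, hx, P.symm h⟩)
    · exact Or.inr (Or.inr (Or.inl ⟨hy, hx, Q.symm h⟩))
    · exact Or.inr (Or.inr (Or.inr (Or.inr ⟨hy, hx, w, hwS, hwT, Q.symm h2, P.symm h1⟩)))
    · exact Or.inr (Or.inr (Or.inr (Or.inl ⟨hy, hx, w, hwS, hwT, P.symm h2, Q.symm h1⟩)))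
  have htrans : ∀ x y z, r x y → r y z → r x z := by
    intro x y z h1 h2
    rcases h1 with rfl | ⟨hxS, hyS, hP⟩ | ⟨hxT, hyT, hQ⟩ | ⟨hxS, hyT, w, hwS, hwT, hP, hQ⟩ |
      ⟨hxT, hyS, w, hwS, hwT, hQ, hP⟩
    · exact h2
    · rcases h2 with rfl | ⟨_, hzS, hP'⟩ | ⟨hyT, hzT, hQ'⟩ | ⟨_, hzT, w, hwS, hwT, hP', hQ'⟩ |
        ⟨hyT, hzS, w, hwS, hwT, hQ', hP'⟩
      · exact Or.inr (Or.inl ⟨hxS, hyS, hP⟩)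
      · exact Or.inr (Or.inl ⟨hxS, hzS, P.trans hP hP'⟩)
      · exact Or.inr (Or.inr (Or.inr (Or.inl ⟨hxS, hzT, y, hyS, hyT, hP, hQ'⟩)))
      · exact Or.inr (Or.inr (Or.inr (Or.inl ⟨hxS, hzT, w, hwS, hwT, P.trans hP hP', hQ'⟩)))
      · have : P y w := (hag y w hyS hyT hwS hwT).mpr hQ'
        exact Or.inr (Or.inl ⟨hxS, hzS, P.trans hP (P.trans this hP')⟩)
    · rcases h2 with rfl | ⟨hyS, hzS, hP'⟩ | ⟨_, hzT, hQ'⟩ | ⟨hyS, hzT, w, hwS, hwT, hP', hQ'⟩ |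
        ⟨_, hzS, w, hwS, hwT, hQ', hP'⟩
      · exact Or.inr (Or.inr (Or.inl ⟨hxT, hyT, hQ⟩))
      · exact Or.inr (Or.inr (Or.inr (Or.inr ⟨hxT, hzS, y, hyS, hyT, hQ, hP'⟩)))
      · exact Or.inr (Or.inr (Or.inl ⟨hxT, hzT, Q.trans hQ hQ'⟩))
      · have : Q y w := (hag y w hyS hyT hwS hwT).mp hP'
        exact Or.inr (Or.inr (Or.inl ⟨hxT, hzT, Q.trans hQ (Q.trans this hQ')⟩))
      · exact Or.inr (Or.inr (Or.inr (Or.inr ⟨hxT, hzS, w, hwS, hwT, Q.trans hQ hQ', hP'⟩)))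
    · rcases h2 with rfl | ⟨hyS, hzS, hP'⟩ | ⟨_, hzT, hQ'⟩ | ⟨hyS, hzT, w', hwS', hwT', hP', hQ'⟩ |
        ⟨_, hzS, w', hwS', hwT', hQ', hP'⟩
      · exact Or.inr (Or.inr (Or.inr (Or.inl ⟨hxS, hyT, w, hwS, hwT, hP, hQ⟩)))
      · have : P w y := (hag w y hwS hwT hyS hyT).mpr hQ
        exact Or.inr (Or.inl ⟨hxS, hzS, P.trans hP (P.trans this hP')⟩)
      · exact Or.inr (Or.inr (Or.inr (Or.inl ⟨hxS, hzT, w, hwS, hwT, hP, Q.trans hQ hQ'⟩)))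
      · have : P w y := (hag w y hwS hwT hyS hyT).mpr hQ
        exact Or.inr (Or.inr (Or.inr (Or.inl
          ⟨hxS, hzT, w', hwS', hwT', P.trans hP (P.trans this hP'), hQ'⟩)))
      · have : Q w w' := Q.trans hQ hQ'
        have : P w w' := (hag w w' hwS hwT hwS' hwT').mpr this
        exact Or.inr (Or.inl ⟨hxS, hzS, P.trans hP (P.trans this hP')⟩)
    · rcases h2 with rfl | ⟨_, hzS, hP'⟩ | ⟨hyT, hzT, hQ'⟩ | ⟨_, hzT, w', hwS', hwT', hP', hQ'⟩ |
        ⟨hyT, hzS, w', hwS', hwT', hQ', hP'⟩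
      · exact Or.inr (Or.inr (Or.inr (Or.inr ⟨hxT, hyS, w, hwS, hwT, hQ, hP⟩)))
      · exact Or.inr (Or.inr (Or.inr (Or.inr ⟨hxT, hzS, w, hwS, hwT, hQ, P.trans hP hP'⟩)))
      · have : Q w y := (hag w y hwS hwT hyS hyT).mp hP
        exact Or.inr (Or.inr (Or.inl ⟨hxT, hzT, Q.trans hQ (Q.trans this hQ')⟩))
      · have hww' : P w w' := P.trans hP hP'
        have : Q w w' := (hag w w' hwS hwT hwS' hwT').mp hww'
        exact Or.inr (Or.inr (Or.inl ⟨hxT, hzT, Q.trans hQ (Q.trans this hQ')⟩))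
      · have : P y w' := (hag y w' hyS hyT hwS' hwT').mpr hQ'
        exact Or.inr (Or.inr (Or.inr (Or.inr
          ⟨hxT, hzS, w, hwS, hwT, hQ, P.trans hP (P.trans this hP')⟩)))
  refine ⟨⟨r, ⟨fun x => Or.inl rfl, fun {x y} h => hsymm x y h,
    fun {x y z} h1 h2 => htrans x y z h1 h2⟩⟩, ?_, ?_⟩
  · apply Setoid.ext; intro a b
    show r a.1 b.1 ↔ P a.1 b.1
    constructor
    · rintro (h | ⟨_, _, h⟩ | ⟨hxT, hyT, h⟩ | ⟨_, hyT, w, hwS, hwT, h1, h2⟩ |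
        ⟨hxT, _, w, hwS, hwT, h1, h2⟩)
      · exact h ▸ P.refl a.1
      · exact h
      · exact (hag a.1 b.1 a.2 hxT b.2 hyT).mpr h
      · exact P.trans h1 ((hag w b.1 hwS hwT b.2 hyT).mpr h2)
      · exact P.trans ((hag a.1 w a.2 hxT hwS hwT).mpr h1) h2
    · intro h; exact Or.inr (Or.inl ⟨a.2, b.2, h⟩)
  · apply Setoid.ext; intro a b
    show r a.1 b.1 ↔ Q a.1 b.1
    constructor
    · rintro (h | ⟨hxS, hyS, h⟩ | ⟨_, _, h⟩ | ⟨hxS, _, w, hwS, hwT, h1, h2⟩ |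
        ⟨_, hyS, w, hwS, hwT, h1, h2⟩)
      · exact h ▸ Q.refl a.1
      · exact (hag a.1 b.1 hxS a.2 hyS b.2).mp h
      · exact h
      · exact Q.trans ((hag a.1 w hxS a.2 hwS hwT).mp h1) h2
      · exact Q.trans h1 ((hag w b.1 hwS hwT hyS b.2).mp h2)
    · intro h; exact Or.inr (Or.inr (Or.inl ⟨a.2, b.2, h⟩))

/-- Extend a setoid on a subset to `V` by singletons outside. -/
def extendS (W : Set V) (ρ : Setoid ↥W) : Setoid V :=
  ⟨fun x y => x = y ∨ ∃ hx : x ∈ W, ∃ hy : y ∈ W, ρ ⟨x, hx⟩ ⟨y, hy⟩,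
    ⟨fun _ => Or.inl rfl,
     fun h => h.elim (fun e => Or.inl e.symm) fun ⟨hx, hy, h⟩ => Or.inr ⟨hy, hx, ρ.symm h⟩,
     fun h1 h2 => by
       rcases h1 with rfl | ⟨hx, hy, h1⟩
       · exact h2
       · rcases h2 with rfl | ⟨hy', hz, h2⟩
         · exact Or.inr ⟨hx, hy, h1⟩
         · exact Or.inr ⟨hx, hz, ρ.trans h1 h2⟩⟩⟩

lemma restrictS_extendS (W : Set V) (ρ : Setoid ↥W) : restrictS W (extendS W ρ) = ρ := by
  apply Setoid.ext; intro a b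
  show (a.1 = b.1 ∨ ∃ hx : a.1 ∈ W, ∃ hy : b.1 ∈ W, ρ ⟨a.1, hx⟩ ⟨b.1, hy⟩) ↔ ρ a b
  constructor
  · rintro (h | ⟨hx, hy, h⟩)
    · exact Subtype.ext h ▸ ρ.refl a
    · exact h
  · intro h; exact Or.inr ⟨a.2, b.2, h⟩

/-- Restriction to a smaller set factors through restriction to a bigger set. -/
lemma restrictS_restrict {S T : Set V} (h : T ⊆ S) (P : Setoid V) :
    Setoid.comap (Set.inclusion h) (restrictS S P) = restrictS T P :=
  Setoid.ext fun _ _ => Iff.rfl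

lemma comap_top {α β : Type*} (f : α → β) : Setoid.comap f (⊤ : Setoid β) = ⊤ :=
  Setoid.ext fun _ _ => by constructor <;> intro <;> trivial

lemma U_le_of_subset [Fintype V] {S T : Set V} (h : T ⊆ S) : U T ≤ U S := by
  intro f hf
  rw [mem_U_iff] at hf ⊢
  obtain ⟨g, hg, hfg⟩ := hf
  refine ⟨fun σ => g (Setoid.comap (Set.inclusion h) σ),
    show g (Setoid.comap (Set.inclusion h) ⊤) = 0 by rw [comap_top]; exact hg, fun P => ?_⟩
  show f P = g (Setoid.comap (Set.inclusion h) (restrictS S P.1))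
  rw [restrictS_restrict h]; exact hfg P

end Aux

/-- `U_S ∩ U_T = U_{S ∩ T}`. -/
theorem stmt3 (S T : Set V) : U S ⊓ U T = U (S ∩ T) := by
  apply le_antisymm
  · intro f hf
    rw [Submodule.mem_inf, mem_U_iff, mem_U_iff] at hf
    obtain ⟨⟨g, hg, hfg⟩, ⟨h, hh, hfh⟩⟩ := hf
    -- the two factorizations agree on all setoids
    have hgh : ∀ P : Setoid V, g (restrictS S P) = h (restrictS T P) := by
      intro P
      by_cases hP : P = ⊤
      · subst hP; rw [restrictS_top, restrictS_top, hg, hh]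
      · rw [← hfg ⟨P, hP⟩, ← hfh ⟨P, hP⟩]
    -- key: g ∘ restrictS S only depends on the restriction to S ∩ T
    have key : ∀ P Q : Setoid V, restrictS (S ∩ T) P = restrictS (S ∩ T) Q →
        g (restrictS S P) = g (restrictS S Q) := by
      intro P Q hPQ
      have hag : ∀ z w : V, z ∈ S → z ∈ T → w ∈ S → w ∈ T → (P z w ↔ Q z w) := by
        intro z w hzS hzT hwS hwT
        have := Setoid.ext_iff.mp hPQ
        exact (Setoid.comap_rel Subtype.val P ⟨z, ⟨hzS, hzT⟩⟩ ⟨w, ⟨hwS, hwT⟩⟩).symm.trans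
          ((this ⟨z, ⟨hzS, hzT⟩⟩ ⟨w, ⟨hwS, hwT⟩⟩).trans
            (Setoid.comap_rel Subtype.val Q ⟨z, ⟨hzS, hzT⟩⟩ ⟨w, ⟨hwS, hwT⟩⟩))
      obtain ⟨R, hRS, hRT⟩ := glue_exists hag
      calc g (restrictS S P) = g (restrictS S R) := by rw [hRS]
        _ = h (restrictS T R) := hgh R
        _ = h (restrictS T Q) := by rw [hRT]
        _ = g (restrictS S Q) := (hgh Q).symm
    rw [mem_U_iff]
    refine ⟨fun ρ => g (restrictS S (extendS (S ∩ T) ρ)), ?_, fun P => ?_⟩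
    · have h1 : g (restrictS S (extendS (S ∩ T) (⊤ : Setoid ↥(S ∩ T)))) =
          g (restrictS S (⊤ : Setoid V)) :=
        key _ _ (by rw [restrictS_extendS, restrictS_top])
      show g (restrictS S (extendS (S ∩ T) (⊤ : Setoid ↥(S ∩ T)))) = 0
      rw [h1, restrictS_top, hg]
    · show f P = g (restrictS S (extendS (S ∩ T) (restrictS (S ∩ T) P.1)))
      rw [hfg P]
      exact key P.1 (extendS (S ∩ T) (restrictS (S ∩ T) P.1))
        (by rw [restrictS_extendS]) 
  · exact le_inf (U_le_of_subset Set.inter_subset_left) (U_le_of_subset Set.inter_subset_right)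
end

section
/- For hyperedges e_1,…,e_m ⊆ V, the dimension of the subspace U_{e_1} + ⋯ + U_{e_m} ⊆ ℝ^{Π*(V)} is given by the inclusion-exclusion formula ∑_{∅ ≠ F ⊆ [m]} (−1)^{|F|+1} (B_{k(F)} − 1), where k(F) = |⋂_{i ∈ F} e_i| and B_n is the n-th Bell number. -/
open Submodule Finset

variable {V : Type*} [Fintype V] [DecidableEq V]

/-!
For a partition `σ` of `V` put `ζ_σ(P) = [σ ≤ P]` on `Π*(V)`. If `σ ≠ ⊥` has all its non-singleton
blocks inside `S`, then `ζ_σ - 1 = -∑_{π ≱ σ|_S} 1_{S,π}` lies in `U_S`. The functions `ζ_σ - 1`,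
`σ ≠ ⊥`, are linearly independent (the zeta function of a finite poset is unitriangular), and those
with `σ` supported in `S` are `B_{|S|} - 1` in number, as many as the generators of `U_S`. Hence they
form a basis of `U_S`, one family serving every `S` at once, so `U_{e_1} + ⋯ + U_{e_m}` has as basis
the union of the index sets. The index set of `⋂_{i ∈ F} e_i` is the intersection of those of the
`e_i`, `i ∈ F`, and inclusion–exclusion gives the formula.
-/

instance Setoid.instFinite {α : Type*} [Finite α] : Finite (Setoid α) :=
  Finite.of_injective (fun σ : Setoid α => ⇑σ) fun _ _ => Setoid.eq_iff_rel_eq.mpr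

noncomputable instance Setoid.instFintype {α : Type*} [Finite α] : Fintype (Setoid α) :=
  Fintype.ofFinite _

instance {α : Type*} [Finite α] : Finite (NontrivPart α) := Subtype.finite

lemma Nat.card_subtype_ne {α : Type*} [Finite α] (a : α) :
    Nat.card {x // x ≠ a} = Nat.card α - 1 := by
  classical
  have := Fintype.ofFinite α
  simp [Nat.card_eq_fintype_card, Fintype.card_subtype_compl]

def Equiv.setoidCongr {α β : Type*} (e : α ≃ β) : Setoid α ≃ Setoid β where
  toFun r := Setoid.comap e.symm r
  invFun s := Setoid.comap e s
  left_inv r := by ext; simp [Setoid.comap_rel]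
  right_inv s := by ext; simp [Setoid.comap_rel]

lemma Nat.card_setoid_eq_bell {α : Type*} [Finite α] : Nat.card (Setoid α) = bell (Nat.card α) :=
  Nat.card_congr (Finite.equivFin α).setoidCongr

lemma one_le_bell (n : ℕ) : 1 ≤ bell n :=
  Nat.one_le_iff_ne_zero.mpr (Nat.card_ne_zero.mpr ⟨⟨⊤⟩, inferInstance⟩)

section Zeta

variable {R β : Type*} [Ring R] [PartialOrder β] [Fintype β] [DecidableLE β]

theorem linearIndependent_zeta :
    LinearIndependent R fun a b : β => if a ≤ b then (1 : R) else 0 := by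
  rw [Fintype.linearIndependent_iff]
  intro g hg a
  induction a using WellFoundedLT.induction with
  | _ a ih =>
    have hga := congrFun hg a
    simp only [Finset.sum_apply, Pi.smul_apply, smul_eq_mul, mul_ite, mul_one, mul_zero,
      Pi.zero_apply] at hga
    rwa [Finset.sum_eq_single a (fun b _ hba => ?_) (by simp), if_pos le_rfl] at hga
    split_ifs with hle
    exacts [ih b (lt_of_le_of_ne hle hba), rfl]

/-- The differences `ζ_a - ζ_⊥` are independent because the `ζ_a` are affinely independent;
they all vanish at `⊤`, so forgetting the value at `⊤` keeps them independent. -/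
theorem linearIndependent_zeta_sub_one [OrderBot β] [OrderTop β] :
    LinearIndependent R fun (a : {a : β // a ≠ ⊥}) (b : {b : β // b ≠ ⊤}) =>
      (if a.1 ≤ b.1 then (1 : R) else 0) - 1 := by
  set ζ : β → β → R := fun a b => if a ≤ b then 1 else 0
  have hsub := (affineIndependent_iff_linearIndependent_vsub R ζ ⊥).mp
    (linearIndependent_zeta (R := R) (β := β)).affineIndependent
  have hdisj : Disjoint (span R (Set.range fun a : {a : β // a ≠ ⊥} => ζ a -ᵥ ζ ⊥))
      (LinearMap.funLeft R R (Subtype.val : {b : β // b ≠ ⊤} → β)).ker := by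
    rw [Submodule.disjoint_def]
    intro f hf hker
    have hspan : span R (Set.range fun a : {a : β // a ≠ ⊥} => ζ a -ᵥ ζ ⊥) ≤
        LinearMap.ker (LinearMap.proj (R := R) (φ := fun _ : β => R) ⊤) :=
      span_le.mpr (by rintro _ ⟨a, rfl⟩; simp [ζ])
    funext b
    by_cases hb : b = ⊤
    · exact hb ▸ hspan hf
    · exact congrFun hker ⟨b, hb⟩
  convert hsub.map hdisj using 1
  · funext a b
    simp [ζ, LinearMap.funLeft_apply]
  · exact rfl

end Zeta

namespace Setoid

variable {α : Type*}

def IsSupportedIn (σ : Setoid α) (S : Set α) : Prop := ∀ ⦃x y⦄, σ x y → x ≠ y → x ∈ S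

lemma isSupportedIn_biInter_iff {ι : Type*} {σ : Setoid α} {F : Finset ι} {e : ι → Set α} :
    σ.IsSupportedIn (⋂ i ∈ F, e i) ↔ ∀ i ∈ F, σ.IsSupportedIn (e i) := by
  simp only [IsSupportedIn, Set.mem_iInter₂]
  exact ⟨fun h i hi x y hxy hne => h hxy hne i hi, fun h x y hxy hne i hi => h i hi hxy hne⟩

lemma IsSupportedIn.le_iff {σ P : Setoid α} {S : Set α} (hσ : σ.IsSupportedIn S) :
    restrictS S σ ≤ restrictS S P ↔ σ ≤ P := by
  refine ⟨fun h x y hxy => ?_, fun h _ _ hab => h hab⟩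
  by_cases hne : x = y
  · exact hne ▸ P.refl' x
  · exact @h ⟨x, hσ hxy hne⟩ ⟨y, hσ (σ.symm' hxy) (Ne.symm hne)⟩ hxy

def extendBySingletons (S : Set α) (π : Setoid S) : Setoid α where
  r x y := x = y ∨ ∃ (hx : x ∈ S) (hy : y ∈ S), π ⟨x, hx⟩ ⟨y, hy⟩
  iseqv := by
    refine ⟨fun x => .inl rfl, ?_, ?_⟩
    · rintro x y (rfl | ⟨hx, hy, h⟩)
      exacts [.inl rfl, .inr ⟨hy, hx, π.symm' h⟩]
    · rintro x y z (rfl | ⟨hx, hy, h⟩) (rfl | ⟨hy', hz, h'⟩)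
      exacts [.inl rfl, .inr ⟨hy', hz, h'⟩, .inr ⟨hx, hy, h⟩, .inr ⟨hx, hz, π.trans' h h'⟩]

def supportedInEquiv (S : Set α) : {σ : Setoid α // σ.IsSupportedIn S} ≃ Setoid S where
  toFun σ := restrictS S σ
  invFun π := ⟨extendBySingletons S π, by
    rintro x y (rfl | ⟨hx, -, -⟩) hne
    exacts [(hne rfl).elim, hx]⟩
  left_inv σ := by
    ext x y
    refine ⟨?_, fun hxy => ?_⟩
    · rintro (rfl | ⟨_, _, h⟩)
      exacts [σ.1.refl' x, h]
    · by_cases hne : x = y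
      · exact .inl hne
      · exact .inr ⟨σ.2 hxy hne, σ.2 (σ.1.symm' hxy) (Ne.symm hne), hxy⟩
  right_inv π := by
    ext a b
    refine ⟨?_, fun h => .inr ⟨a.2, b.2, h⟩⟩
    rintro (h | ⟨_, _, h⟩)
    exacts [Subtype.ext h ▸ π.refl' a, h]

lemma supportedInEquiv_eq_bot_iff {S : Set α} {σ : {σ : Setoid α // σ.IsSupportedIn S}} :
    supportedInEquiv S σ = ⊥ ↔ σ.1 = ⊥ := by
  have hbot : supportedInEquiv S ⟨⊥, fun _ _ h hne => (hne h).elim⟩ = ⊥ := by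
    ext a b
    exact Subtype.ext_iff.symm
  rw [← hbot, (supportedInEquiv S).apply_eq_iff_eq, Subtype.ext_iff]

lemma nat_card_isSupportedIn_ne_bot [Finite α] (S : Set α) :
    Nat.card {σ : Setoid α // σ.IsSupportedIn S ∧ σ ≠ ⊥} = bell (Nat.card S) - 1 :=
  calc Nat.card {σ : Setoid α // σ.IsSupportedIn S ∧ σ ≠ ⊥}
      = Nat.card {σ : {σ : Setoid α // σ.IsSupportedIn S} // σ.1 ≠ ⊥} :=
        Nat.card_congr (Equiv.subtypeSubtypeEquivSubtypeInter _ _).symm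
    _ = Nat.card {π : Setoid S // π ≠ ⊥} :=
        Nat.card_congr <| (supportedInEquiv S).subtypeEquiv fun _ =>
          supportedInEquiv_eq_bot_iff.not.symm
    _ = bell (Nat.card S) - 1 := by rw [Nat.card_subtype_ne, Nat.card_setoid_eq_bell]

end Setoid

lemma LinearIndepOn.finrank_span_image_finset {K M ι : Type*} [DivisionRing K] [AddCommGroup M]
    [Module K M] {v : ι → M} {s : Finset ι} (hs : LinearIndepOn K v s) :
    Module.finrank K (span K (v '' s)) = s.card := by
  rw [Set.image_eq_range, finrank_span_eq_card hs]
  simp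

section Indicators

variable {α : Type*}

open Classical in
noncomputable def zeta (σ : Setoid α) : NontrivPart α → ℝ := fun P => if σ ≤ P.1 then 1 else 0

lemma linearIndepOn_zeta_sub_one [Finite α] :
    LinearIndepOn ℝ (fun σ : Setoid α => zeta σ - 1) {σ | σ ≠ ⊥} := by
  classical
  exact linearIndependent_zeta_sub_one (β := Setoid α)

lemma sum_ind_filter [Finite α] (S : Set α) (p : Setoid S → Prop) [DecidablePred p] :
    ∑ π ∈ univ.filter p, ind S π = fun P => if p (restrictS S P.1) then 1 else 0 := by
  funext P
  rw [Finset.sum_apply]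
  by_cases hp : p (restrictS S P.1)
  · rw [if_pos hp, Finset.sum_eq_single_of_mem (f := fun π => ind S π P) _
      (mem_filter.2 ⟨mem_univ _, hp⟩) fun π _ hne => if_neg (Ne.symm hne)]
    exact if_pos rfl
  · rw [if_neg hp]
    exact Finset.sum_eq_zero fun π hπ =>
      if_neg fun h : restrictS S P.1 = π => hp (h ▸ (mem_filter.1 hπ).2)

lemma zeta_sub_one_mem_U [Finite α] {σ : Setoid α} {S : Set α} (hσ : σ.IsSupportedIn S) :
    zeta σ - 1 ∈ U S := by
  classical
  have hsum : zeta σ - 1 = -∑ π ∈ univ.filter (fun π => ¬ restrictS S σ ≤ π), ind S π := by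
    rw [sum_ind_filter]
    funext P
    by_cases h : σ ≤ P.1 <;> simp [zeta, hσ.le_iff, h]
  rw [hsum]
  refine neg_mem (sum_mem fun π hπ => subset_span ⟨π, ?_, rfl⟩)
  rintro rfl
  exact (mem_filter.1 hπ).2 le_top

lemma finrank_U_le [Finite α] (S : Set α) : Module.finrank ℝ (U S) ≤ bell (Nat.card S) - 1 := by
  have hU : U S = span ℝ (Set.range fun π : {π : Setoid S // π ≠ ⊤} => ind S π) := by
    unfold U
    congr 1
    ext f
    simp [eq_comm]
  classical
  rw [hU, ← Nat.card_setoid_eq_bell, ← Nat.card_subtype_ne ⊤, Nat.card_eq_fintype_card]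
  exact finrank_range_le_card _

open Classical in
noncomputable def basisIndex [Finite α] (S : Set α) : Finset (Setoid α) :=
  univ.filter fun σ => σ.IsSupportedIn S ∧ σ ≠ ⊥

lemma mem_basisIndex [Finite α] {S : Set α} {σ : Setoid α} :
    σ ∈ basisIndex S ↔ σ.IsSupportedIn S ∧ σ ≠ ⊥ := by
  classical
  simp [basisIndex]

lemma card_basisIndex [Finite α] (S : Set α) : (basisIndex S).card = bell (Nat.card S) - 1 := by
  classical
  rw [basisIndex, ← Fintype.card_subtype, ← Nat.card_eq_fintype_card,
    Setoid.nat_card_isSupportedIn_ne_bot]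

lemma basisIndex_subset [Finite α] (S : Set α) :
    (basisIndex S : Set (Setoid α)) ⊆ {σ | σ ≠ ⊥} :=
  fun _ hσ => (mem_basisIndex.1 hσ).2

lemma U_eq_span_basisIndex [Finite α] (S : Set α) :
    U S = span ℝ ((fun σ => zeta σ - 1) '' basisIndex S) := by
  symm
  apply Submodule.eq_of_le_of_finrank_le
  · exact span_le.mpr <| by
      rintro _ ⟨σ, hσ, rfl⟩
      exact zeta_sub_one_mem_U (mem_basisIndex.1 hσ).1
  · rw [(linearIndepOn_zeta_sub_one.mono (basisIndex_subset S)).finrank_span_image_finset,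
      card_basisIndex]
    exact finrank_U_le S

lemma finrank_iSup_U [Finite α] [DecidableEq (Setoid α)] {ι : Type*} [Fintype ι]
    (e : ι → Set α) :
    Module.finrank ℝ ↥(⨆ i, U (e i)) = (univ.biUnion fun i => basisIndex (e i)).card := by
  classical
  have hspan : ⨆ i, U (e i) =
      span ℝ ((fun σ => zeta σ - 1) '' ↑(univ.biUnion fun i => basisIndex (e i))) := by
    simp_rw [U_eq_span_basisIndex, ← span_iUnion, ← Set.image_iUnion, coe_biUnion, coe_univ,
      Set.mem_univ, Set.iUnion_true]
  rw [hspan, LinearIndepOn.finrank_span_image_finset (linearIndepOn_zeta_sub_one.mono ?_)]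
  simpa using fun i => basisIndex_subset (e i)

lemma inf'_basisIndex [Finite α] [DecidableEq (Setoid α)] {ι : Type*} (e : ι → Set α)
    {F : Finset ι} (hF : F.Nonempty) :
    F.inf' hF (fun i => basisIndex (e i)) = basisIndex (⋂ i ∈ F, e i) := by
  ext σ
  simp only [mem_inf', mem_basisIndex, ne_eq, Setoid.isSupportedIn_biInter_iff]
  obtain ⟨i₀, hi₀⟩ := hF
  exact ⟨fun h => ⟨fun i hi => (h i hi).1, (h i₀ hi₀).2⟩, fun h i hi => ⟨h.1 i hi, h.2⟩⟩

end Indicators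

/-- inclusion-exclusion formula for the dimension of `U_{e_1} + ⋯ + U_{e_m}`:
`dim(∑_i U_{e_i}) = ∑_{∅ ≠ F ⊆ [m]} (−1)^{|F|+1} (B_{k(F)} − 1)` with
`k(F) = |⋂_{i ∈ F} e_i|`. -/
theorem stmt6 (m : ℕ) (e : Fin m → Set V) :
    (Module.finrank ℝ ↥(⨆ i, U (e i)) : ℤ) =
      ∑ F ∈ Finset.univ.powerset.filter (fun F : Finset (Fin m) => F ≠ ∅),
        (-1 : ℤ) ^ (F.card + 1) * ((bell (Nat.card ↥(⋂ i ∈ F, e i)) : ℤ) - 1) := by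
  classical
  rw [finrank_iSup_U, inclusion_exclusion_card_biUnion]
  simp only [inf'_basisIndex, card_basisIndex]
  rw [Finset.sum_coe_sort (univ.powerset.filter (·.Nonempty)) fun F =>
    (-1 : ℤ) ^ (#F + 1) * ((bell (Nat.card ↥(⋂ i ∈ F, e i)) - 1 : ℕ) : ℤ)]
  refine Finset.sum_congr (by simp [Finset.nonempty_iff_ne_empty]) fun F _ => ?_
  rw [Nat.cast_sub (one_le_bell _), Nat.cast_one]
end
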